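/- Let ω be a normalized weight function satisfying (ω₃), and let W^x_p := exp((1/x)φ*_ω(xp)) for x>0, p∈ℕ. Then for all x>0 and all t>0 one has exp(−ω(1/t)) ≤ (h_{W^x}(t))^x. If ω moreover satisfies (ω₄), then for every x>0 there exists C_x>0 such that for all t>0: exp(−C_x)·(h_{W^x}(t))^{2x} ≤ exp(−ω(1/t)). -/
import Mathlib


open Filter MeasureTheory Set Asymptotics Topology

noncomputable section

/-- A weight function: continuous and nondecreasing on `[0,∞)`, vanishing at `0`,
and tending to `∞` at `∞`. -/
def IsWeightFun (ω : ℝ → ℝ) : Prop :=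
  ContinuousOn ω (Ici 0) ∧ MonotoneOn ω (Ici 0) ∧ ω 0 = 0 ∧ Tendsto ω atTop atTop

/-- A weight function is normalized if it vanishes on `[0,1]`. -/
def IsNormalized (ω : ℝ → ℝ) : Prop :=
  ∀ t ∈ Icc (0 : ℝ) 1, ω t = 0

/-- The Legendre-Fenchel-Young conjugate `φ*_ω(x) = sup_{y ≥ 0} (x y - ω(e^y))`. -/
def legConj (ω : ℝ → ℝ) (x : ℝ) : ℝ :=
  sSup ((fun y => x * y - ω (Real.exp y)) '' Ici 0)

/-- The weight matrix associated with `ω`: `W^x_p = exp((1/x) φ*_ω(x p))`. -/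
def Wmat (ω : ℝ → ℝ) (x : ℝ) (p : ℕ) : ℝ :=
  Real.exp ((1 / x) * legConj ω (x * p))

/-- The function `h_M(t) = inf_{k ∈ ℕ} M_k t^k`. -/
def hFun (M : ℕ → ℝ) (t : ℝ) : ℝ :=
  sInf (Set.range fun k : ℕ => M k * t ^ k)

lemma omega_nonneg {ω : ℝ → ℝ} (hω : IsWeightFun ω) {u : ℝ} (hu : 0 ≤ u) : 0 ≤ ω u := by
  calc (0:ℝ) = ω 0 := hω.2.2.1.symm
    _ ≤ ω u := hω.2.1 (mem_Ici.2 le_rfl) (mem_Ici.2 hu) hu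

lemma key_bdd {ω : ℝ → ℝ} (hω : IsWeightFun ω) (h3 : (fun t => Real.log t) =o[atTop] ω)
    {c : ℝ} (hc : 0 ≤ c) : ∃ B, ∀ y : ℝ, 0 ≤ y → c * y - ω (Real.exp y) ≤ B := by
  have hε : (0:ℝ) < 1 / (c + 1) := by positivity
  obtain ⟨T, hT⟩ := eventually_atTop.mp (isLittleO_iff.mp h3 hε)
  refine ⟨c * Real.log (max T 1), fun y hy => ?_⟩
  have hωnn : 0 ≤ ω (Real.exp y) := omega_nonneg hω (Real.exp_pos y).le
  have hlog : 0 ≤ Real.log (max T 1) := Real.log_nonneg (le_max_right _ _)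
  by_cases hcase : Real.exp y ≤ max T 1
  · have hy' : y ≤ Real.log (max T 1) := by
      rw [← Real.log_exp y]
      exact Real.log_le_log (Real.exp_pos y) hcase
    nlinarith
  · push_neg at hcase
    have h1 := hT (Real.exp y) (le_of_lt (lt_of_le_of_lt (le_max_left T 1) hcase))
    rw [Real.log_exp, Real.norm_eq_abs, Real.norm_eq_abs, abs_of_nonneg hy,
      abs_of_nonneg hωnn] at h1
    have h2 : c * y ≤ c * ((1 / (c + 1)) * ω (Real.exp y)) :=
      mul_le_mul_of_nonneg_left h1 hc
    have h4 : c * (1 / (c + 1)) ≤ 1 := by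
      rw [mul_one_div]
      exact div_le_one_of_le₀ (by linarith) (by positivity)
    nlinarith

lemma legConj_bddAbove {ω : ℝ → ℝ} (hω : IsWeightFun ω)
    (h3 : (fun t => Real.log t) =o[atTop] ω) {c : ℝ} (hc : 0 ≤ c) :
    BddAbove ((fun y => c * y - ω (Real.exp y)) '' Ici 0) := by
  obtain ⟨B, hB⟩ := key_bdd hω h3 hc
  exact ⟨B, by rintro z ⟨y, hy, rfl⟩; exact hB y hy⟩

lemma legConj_nonneg {ω : ℝ → ℝ} (hω : IsWeightFun ω) (hn : IsNormalized ω)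
    (h3 : (fun t => Real.log t) =o[atTop] ω) {c : ℝ} (hc : 0 ≤ c) :
    0 ≤ legConj ω c := by
  have h0 : (0:ℝ) ∈ (fun y => c * y - ω (Real.exp y)) '' Ici 0 :=
    ⟨0, self_mem_Ici, by simp [Real.exp_zero, hn 1 ⟨zero_le_one, le_rfl⟩]⟩
  exact le_csSup (legConj_bddAbove hω h3 hc) h0

/-- Subgradient existence for a monotone convex function on ℝ. -/
lemma exists_subgradient {φ : ℝ → ℝ} (hcv : ConvexOn ℝ univ φ) (hm : Monotone φ) (s : ℝ) :
    ∃ m : ℝ, 0 ≤ m ∧ ∀ y : ℝ, φ s + m * (y - s) ≤ φ y := by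
  set S := (fun h => (φ (s + h) - φ s) / h) '' Ioi (0:ℝ) with hS
  have hne : S.Nonempty := ⟨_, 1, mem_Ioi.2 one_pos, rfl⟩
  have hnn : ∀ z ∈ S, 0 ≤ z := by
    rintro z ⟨h, hh, rfl⟩
    exact div_nonneg (sub_nonneg.2 (hm (by linarith [mem_Ioi.1 hh]))) (le_of_lt (mem_Ioi.1 hh))
  have hbdd : BddBelow S := ⟨0, fun z hz => hnn z hz⟩
  refine ⟨sInf S, le_csInf hne hnn, fun y => ?_⟩
  rcases lt_trichotomy y s with hy | rfl | hy
  · have hslope : (φ s - φ y) / (s - y) ≤ sInf S := by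
      apply le_csInf hne
      rintro z ⟨h, hh, rfl⟩
      have := hcv.slope_mono_adjacent (mem_univ y) (mem_univ (s + h)) hy
        (by linarith [mem_Ioi.1 hh])
      simpa using this
    have h1 : sInf S * (s - y) ≥ (φ s - φ y) / (s - y) * (s - y) :=
      mul_le_mul_of_nonneg_right hslope (by linarith)
    rw [div_mul_cancel₀ _ (by linarith : s - y ≠ 0)] at h1
    nlinarith
  · simp
  · have hslope : sInf S ≤ (φ y - φ s) / (y - s) := by
      apply csInf_le hbdd
      exact ⟨y - s, mem_Ioi.2 (by linarith), by simp⟩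
    have h1 : sInf S * (y - s) ≤ (φ y - φ s) / (y - s) * (y - s) :=
      mul_le_mul_of_nonneg_right hslope (by linarith)
    rw [div_mul_cancel₀ _ (by linarith : y - s ≠ 0)] at h1
    linarith

lemma Wmat_term_eq {ω : ℝ → ℝ} {x t : ℝ} (ht : 0 < t) (k : ℕ) :
    Wmat ω x k * t ^ k = Real.exp ((1 / x) * legConj ω (x * k) + k * Real.log t) := by
  rw [Wmat, Real.exp_add]
  congr 1
  rw [← Real.log_pow, Real.exp_log (pow_pos ht k)]


/-- For a normalized weight `ω` with `(ω₃)`: `exp(-ω(1/t)) ≤ (h_{W^x}(t))^x` for all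
`x > 0`, `t > 0`; and if `ω` also has `(ω₄)`, for every `x > 0` there is `C > 0` with
`exp(-C) (h_{W^x}(t))^{2x} ≤ exp(-ω(1/t))` for all `t > 0`. -/
theorem stmt7 (ω : ℝ → ℝ) (hω : IsWeightFun ω) (hn : IsNormalized ω)
    (h3 : (fun t => Real.log t) =o[atTop] ω) :
    (∀ x : ℝ, 0 < x → ∀ t : ℝ, 0 < t →
        Real.exp (-ω (1 / t)) ≤ hFun (Wmat ω x) t ^ x) ∧
    (ConvexOn ℝ univ (fun t => ω (Real.exp t)) →
      ∀ x : ℝ, 0 < x → ∃ C : ℝ, 0 < C ∧ ∀ t : ℝ, 0 < t →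
        Real.exp (-C) * hFun (Wmat ω x) t ^ (2 * x) ≤ Real.exp (-ω (1 / t))) := by
  constructor
  · -- Part 1
    intro x hx t ht
    obtain ⟨s, hsdef⟩ : ∃ s : ℝ, s = -Real.log t := ⟨_, rfl⟩
    have hts : Real.exp s = 1 / t := by
      rw [hsdef, Real.exp_neg, Real.exp_log ht, one_div]
    have key : ∀ k : ℕ, Real.exp (-ω (1 / t) / x) ≤ Wmat ω x k * t ^ k := by
      intro k
      have hc : (0:ℝ) ≤ x * k := by positivity
      have hbdd := legConj_bddAbove hω h3 hc
      have hcore : x * k * s - ω (1 / t) ≤ legConj ω (x * k) := by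
        rcases le_or_gt 0 s with hs0 | hs0
        · have h1 : x * k * s - ω (Real.exp s) ≤ legConj ω (x * k) :=
            le_csSup hbdd ⟨s, hs0, rfl⟩
          rwa [hts] at h1
        · have h1 : x * ↑k * s ≤ 0 := mul_nonpos_of_nonneg_of_nonpos hc hs0.le
          have h2 : 0 ≤ ω (1 / t) := omega_nonneg hω (by positivity)
          have h4 : 0 ≤ legConj ω (x * k) := legConj_nonneg hω hn h3 hc
          linarith
      rw [Wmat_term_eq ht, Real.exp_le_exp, div_le_iff₀ hx]
      have hlt : Real.log t = -s := by rw [hsdef]; ring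
      rw [hlt]
      have hxne : x ≠ 0 := ne_of_gt hx
      field_simp
      nlinarith [hcore]
    have hinf : Real.exp (-ω (1 / t) / x) ≤ hFun (Wmat ω x) t := by
      apply le_csInf (range_nonempty _)
      rintro z ⟨k, rfl⟩
      exact key k
    calc Real.exp (-ω (1 / t)) = Real.exp (-ω (1 / t) / x) ^ x := by
          rw [← Real.exp_mul]
          congr 1
          field_simp
      _ ≤ hFun (Wmat ω x) t ^ x :=
          Real.rpow_le_rpow (Real.exp_pos _).le hinf hx.le
  · -- Part 2
    intro h4 x hx
    have hφm : Monotone fun y => ω (Real.exp y) := fun a b hab =>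
      hω.2.1 (mem_Ici.2 (Real.exp_pos a).le) (mem_Ici.2 (Real.exp_pos b).le)
        (Real.exp_le_exp.2 hab)
    -- get s₀ from (ω₃)
    obtain ⟨T, hT⟩ := eventually_atTop.mp
      (isLittleO_iff.mp h3 (show (0:ℝ) < 1 / (2 * x) by positivity))
    obtain ⟨s₀, hs₀def⟩ : ∃ s₀ : ℝ, s₀ = max (Real.log (max T 1)) 1 := ⟨_, rfl⟩
    have hs₀pos : (0:ℝ) < s₀ := by
      rw [hs₀def]; exact lt_of_lt_of_le one_pos (le_max_right _ _)
    have hbig : ∀ s : ℝ, s₀ ≤ s → 2 * x * s ≤ ω (Real.exp s) := by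
      intro s hs
      have hsnn : 0 ≤ s := le_trans hs₀pos.le hs
      have hT' : max T 1 ≤ Real.exp s := by
        calc max T 1 = Real.exp (Real.log (max T 1)) :=
              (Real.exp_log (lt_of_lt_of_le one_pos (le_max_right _ _))).symm
          _ ≤ Real.exp s := Real.exp_le_exp.2
              (le_trans (le_max_left _ _) (hs₀def ▸ hs))
      have h1 := hT (Real.exp s) (le_trans (le_max_left T 1) hT')
      rw [Real.log_exp, Real.norm_eq_abs, Real.norm_eq_abs, abs_of_nonneg hsnn,
        abs_of_nonneg (omega_nonneg hω (Real.exp_pos s).le)] at h1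
      have h2 : 2 * x * s ≤ 2 * x * (1 / (2 * x) * ω (Real.exp s)) :=
        mul_le_mul_of_nonneg_left h1 (by positivity)
      have h5 : 2 * x * (1 / (2 * x) * ω (Real.exp s)) = ω (Real.exp s) := by
        field_simp
      linarith
    obtain ⟨C, hCdef⟩ : ∃ C : ℝ, C = max (2 * x * s₀) 1 := ⟨_, rfl⟩
    have hCpos : 0 < C := by
      rw [hCdef]; exact lt_of_lt_of_le one_pos (le_max_right _ _)
    refine ⟨C, hCpos, fun t ht => ?_⟩
    obtain ⟨s, hsdef⟩ : ∃ s : ℝ, s = -Real.log t := ⟨_, rfl⟩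
    have hts : Real.exp s = 1 / t := by
      rw [hsdef, Real.exp_neg, Real.exp_log ht, one_div]
    have hωt : ω (1 / t) = ω (Real.exp s) := by rw [hts]
    have hFnn : 0 ≤ hFun (Wmat ω x) t := by
      apply Real.sInf_nonneg
      rintro z ⟨k, rfl⟩
      exact mul_nonneg (Real.exp_pos _).le (pow_nonneg ht.le k)
    have hFbdd : BddBelow (Set.range fun k : ℕ => Wmat ω x k * t ^ k) := by
      refine ⟨0, ?_⟩
      rintro z ⟨k, rfl⟩
      exact mul_nonneg (Real.exp_pos _).le (pow_nonneg ht.le k)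
    rcases le_or_gt 0 s with hs0 | hs0
    · -- main case: t ≤ 1
      obtain ⟨m, hm0, hsub⟩ := exists_subgradient h4 hφm s
      obtain ⟨k, hkdef⟩ : ∃ k : ℕ, k = ⌊m / x⌋₊ := ⟨_, rfl⟩
      have hk1 : x * k ≤ m := by
        have h5 : (k : ℝ) ≤ m / x := by
          rw [hkdef]; exact_mod_cast Nat.floor_le (div_nonneg hm0 hx.le)
        calc x * k ≤ x * (m / x) := mul_le_mul_of_nonneg_left h5 hx.le
          _ = m := by field_simp
      have hk2 : m - x ≤ x * k := by
        have h5 : m / x < (k : ℝ) + 1 := by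
          rw [hkdef]; exact_mod_cast Nat.lt_floor_add_one (m / x)
        have h6 : m / x * x < ((k : ℝ) + 1) * x := mul_lt_mul_of_pos_right h5 hx
        rw [div_mul_cancel₀ _ (ne_of_gt hx)] at h6
        nlinarith
      have hck : (0:ℝ) ≤ x * k := by positivity
      have hL : legConj ω (x * k) ≤ m * s - ω (Real.exp s) := by
        apply csSup_le (nonempty_Ici.image _)
        rintro z ⟨y, hy0, rfl⟩
        show x * ↑k * y - ω (Real.exp y) ≤ m * s - ω (Real.exp s)
        have h5 : x * ↑k * y ≤ m * y :=
          mul_le_mul_of_nonneg_right hk1 (mem_Ici.1 hy0)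
        have h6 := hsub y
        nlinarith
      have hterm : hFun (Wmat ω x) t ≤ Wmat ω x k * t ^ k :=
        csInf_le hFbdd ⟨k, rfl⟩
      have hCs : 2 * x * s - ω (Real.exp s) ≤ C := by
        rcases le_or_gt s₀ s with hcase | hcase
        · have h5 := hbig s hcase
          linarith
        · have h5 : 2 * x * s ≤ 2 * x * s₀ :=
            mul_le_mul_of_nonneg_left hcase.le (by positivity)
          have h6 : 0 ≤ ω (Real.exp s) := omega_nonneg hω (Real.exp_pos s).le
          have h7 : 2 * x * s₀ ≤ C := hCdef ▸ le_max_left _ _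
          linarith
      calc Real.exp (-C) * hFun (Wmat ω x) t ^ (2 * x)
          ≤ Real.exp (-C) * (Wmat ω x k * t ^ k) ^ (2 * x) := by
            apply mul_le_mul_of_nonneg_left _ (Real.exp_pos _).le
            exact Real.rpow_le_rpow hFnn hterm (by positivity)
        _ = Real.exp (-C + (1 / x * legConj ω (x * k) + ↑k * Real.log t) * (2 * x)) := by
            rw [Wmat_term_eq ht, ← Real.exp_mul, ← Real.exp_add]
        _ ≤ Real.exp (-ω (1 / t)) := by
            rw [Real.exp_le_exp, hωt]
            have hlt : Real.log t = -s := by rw [hsdef]; ring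
            rw [hlt]
            have hxne : x ≠ 0 := ne_of_gt hx
            have h8 : (m - x) * s ≤ x * ↑k * s := mul_le_mul_of_nonneg_right hk2 hs0
            have h9 : (1 / x * legConj ω (x * k) + ↑k * -s) * (2 * x)
                = 2 * legConj ω (x * k) - 2 * (x * ↑k * s) := by
              field_simp
              ring
            rw [h9]
            nlinarith [hL, h8, hCs]
    · -- t > 1
      have h1t : 1 ≤ t := by
        have hlt : 0 < Real.log t := by
          have := hs0; rw [hsdef] at this; linarith
        have h := Real.add_one_le_exp (Real.log t)
        rw [Real.exp_log ht] at h
        linarith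
      have hω0 : ω (1 / t) = 0 := by
        apply hn
        exact ⟨by positivity, (div_le_one ht).2 h1t⟩
      have hL0 : legConj ω 0 = 0 := by
        apply le_antisymm
        · apply csSup_le (nonempty_Ici.image _)
          rintro z ⟨y, hy0, rfl⟩
          show 0 * y - ω (Real.exp y) ≤ 0
          have := omega_nonneg hω (Real.exp_pos y).le
          linarith
        · exact legConj_nonneg hω hn h3 le_rfl
      have hterm : hFun (Wmat ω x) t ≤ 1 := by
        have h5 : hFun (Wmat ω x) t ≤ Wmat ω x 0 * t ^ 0 := csInf_le hFbdd ⟨0, rfl⟩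
        simp only [Wmat, Nat.cast_zero, mul_zero, hL0, Real.exp_zero, pow_zero,
          mul_one] at h5
        exact h5
      rw [hω0]
      calc Real.exp (-C) * hFun (Wmat ω x) t ^ (2 * x)
          ≤ 1 * 1 := by
            apply mul_le_mul _ _ (Real.rpow_nonneg hFnn _) zero_le_one
            · exact Real.exp_le_one_iff.2 (by linarith)
            · exact Real.rpow_le_one hFnn hterm (by positivity)
        _ = Real.exp (-0) := by simp
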